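/- Let P = (A,B,R), P' = (A',B',R'), Q = (C,B,T) and Q' = (C',B',T') be relations. If ONE has a winning strategy in the game G(P',Q') and ONE has a winning strategy in the game G(P,Q), then ONE has a winning strategy in the game G(P⊗P', Q⊗Q'). -/

import Mathlib

open Set

/-- `GDom R` is the set of dominating families of the relation `R`:
sets `Z ⊆ B` such that every `a ∈ A` is dominated by some `b ∈ Z`. -/
def GDom {α β : Type*} (R : α → β → Prop) : Set (Set β) :=
  {Z | ∀ a : α, ∃ b ∈ Z, R a b}

/-- A relation is total: every element of the domain is dominated by something. -/
def IsTotalRel {α β : Type*} (R : α → β → Prop) : Prop :=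
  ∀ a : α, ∃ b : β, R a b

/-- The product of two relations. -/
def GProd {α β α' β' : Type*} (R : α → β → Prop) (R' : α' → β' → Prop) :
    α × α' → β × β' → Prop :=
  fun a b => R a.1 b.1 ∧ R' a.2 b.2

/-- The finite history consisting of the first `n` moves of the sequence `b`. -/
def GHist {β : Type*} (b : ℕ → β) (n : ℕ) : List β :=
  List.ofFn fun i : Fin n => b i

/-- ONE has a winning strategy in the game `G(P,Q)`: in inning `n` ONE plays `aₙ ∈ A`,
TWO answers `bₙ` with `R aₙ bₙ`; ONE wins iff `{bₙ : n} ∈ GDom T`. -/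
def OneWinsG {α β γ : Type*} (R : α → β → Prop) (T : γ → β → Prop) : Prop :=
  ∃ σ : List β → α, ∀ b : ℕ → β,
    (∀ n, R (σ (GHist b n)) (b n)) → Set.range b ∈ GDom T

/-- TWO has a winning strategy in the game `G(P,Q)`. -/
def TwoWinsG {α β γ : Type*} (R : α → β → Prop) (T : γ → β → Prop) : Prop :=
  ∃ τ : List α → β, ∀ a : ℕ → α,
    (∀ n, R (a n) (τ (GHist a (n + 1)))) ∧
    Set.range (fun n => τ (GHist a (n + 1))) ∉ GDom T

/-- ONE has a winning strategy in the game `G₁(𝒜,ℬ)`: in inning `n` ONE plays `Aₙ ∈ 𝒜`,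
TWO answers `bₙ ∈ Aₙ`; TWO wins iff `{bₙ : n} ∈ ℬ`. -/
def OneWinsG1 {β : Type*} (𝒜 ℬ : Set (Set β)) : Prop :=
  ∃ σ : List β → Set β, (∀ h, σ h ∈ 𝒜) ∧
    ∀ b : ℕ → β, (∀ n, b n ∈ σ (GHist b n)) → Set.range b ∉ ℬ

/-- TWO has a winning strategy in the game `G₁(𝒜,ℬ)`. -/
def TwoWinsG1 {β : Type*} (𝒜 ℬ : Set (Set β)) : Prop :=
  ∃ τ : List (Set β) → β, ∀ S : ℕ → Set β, (∀ n, S n ∈ 𝒜) →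
    (∀ n, τ (GHist S (n + 1)) ∈ S n) ∧
    Set.range (fun n => τ (GHist S (n + 1))) ∈ ℬ

/-- TWO has a winning strategy in the game `G_fin(𝒜,ℬ)`: in inning `n` ONE plays `Aₙ ∈ 𝒜`,
TWO answers a finite `Fₙ ⊆ Aₙ`; TWO wins iff `⋃ₙ Fₙ ∈ ℬ`. -/
def TwoWinsGfin {β : Type*} (𝒜 ℬ : Set (Set β)) : Prop :=
  ∃ τ : List (Set β) → Set β, ∀ S : ℕ → Set β, (∀ n, S n ∈ 𝒜) →
    (∀ n, τ (GHist S (n + 1)) ⊆ S n ∧ (τ (GHist S (n + 1))).Finite) ∧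
    (⋃ n, τ (GHist S (n + 1))) ∈ ℬ

/-- `(𝒜,ℬ)`-Lindelöf: every member of `𝒜` has a countable subset belonging to `ℬ`. -/
def LindelofFam {β : Type*} (𝒜 ℬ : Set (Set β)) : Prop :=
  ∀ S ∈ 𝒜, ∃ C ⊆ S, C.Countable ∧ C ∈ ℬ

/-- The selection principle `S₁(𝒜,ℬ)`. -/
def SelS1 {β : Type*} (𝒜 ℬ : Set (Set β)) : Prop :=
  ∀ A : ℕ → Set β, (∀ n, A n ∈ 𝒜) →
    ∃ b : ℕ → β, (∀ n, b n ∈ A n) ∧ Set.range b ∈ ℬ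

/-- The selection principle `S_fin(𝒜,ℬ)`. -/
def SelSfin {β : Type*} (𝒜 ℬ : Set (Set β)) : Prop :=
  ∀ A : ℕ → Set β, (∀ n, A n ∈ 𝒜) →
    ∃ F : ℕ → Set β, (∀ n, F n ⊆ A n ∧ (F n).Finite) ∧ (⋃ n, F n) ∈ ℬ

/-- `𝒪_X`: the family of open covers of `X`. -/
def OpenCovers (X : Type*) [TopologicalSpace X] : Set (Set (Set X)) :=
  {𝒰 | (∀ U ∈ 𝒰, IsOpen U) ∧ ⋃₀ 𝒰 = Set.univ}

/-- ONE has a winning strategy in the point-open game on `X`. -/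
def OneWinsPointOpen (X : Type*) [TopologicalSpace X] : Prop :=
  ∃ σ : List (Set X) → X, ∀ U : ℕ → Set X,
    (∀ n, IsOpen (U n) ∧ σ (GHist U n) ∈ U n) → Set.range U ∈ OpenCovers X

/-- TWO has a winning strategy in the point-open game on `X`. -/
def TwoWinsPointOpen (X : Type*) [TopologicalSpace X] : Prop :=
  ∃ τ : List X → Set X, ∀ x : ℕ → X,
    (∀ n, IsOpen (τ (GHist x (n + 1))) ∧ x n ∈ τ (GHist x (n + 1))) ∧
    Set.range (fun n => τ (GHist x (n + 1))) ∉ OpenCovers X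

/-- `𝔇_X`: the family of dense subsets of `X`. -/
def DenseSets (X : Type*) [TopologicalSpace X] : Set (Set X) :=
  {D | Dense D}

/-- ONE has a winning strategy in the point-picking game `G^D_ω(X)` of Berner and Juhász. -/
def OneWinsPointPicking (X : Type*) [TopologicalSpace X] : Prop :=
  ∃ σ : List X → Set X, (∀ h, IsOpen (σ h) ∧ (σ h).Nonempty) ∧
    ∀ x : ℕ → X, (∀ n, x n ∈ σ (GHist x n)) → Dense (Set.range x)

/-- TWO has a winning strategy in the point-picking game `G^D_ω(X)`. -/
def TwoWinsPointPicking (X : Type*) [TopologicalSpace X] : Prop :=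
  ∃ τ : List (Set X) → X, ∀ U : ℕ → Set X,
    (∀ n, IsOpen (U n) ∧ (U n).Nonempty) →
    (∀ n, τ (GHist U (n + 1)) ∈ U n) ∧
    ¬ Dense (Set.range fun n => τ (GHist U (n + 1)))

/-- `𝒟_X`: families of open sets whose union is dense in `X`. -/
def DenseUnionFams (X : Type*) [TopologicalSpace X] : Set (Set (Set X)) :=
  {𝒰 | (∀ U ∈ 𝒰, IsOpen U) ∧ Dense (⋃₀ 𝒰)}

/-- ONE has a winning strategy in Tkachuk's game `θ(X)`. -/
def OneWinsTheta (X : Type*) [TopologicalSpace X] : Prop :=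
  ∃ σ : List (Set X) → X, ∀ U : ℕ → Set X,
    (∀ n, IsOpen (U n) ∧ σ (GHist U n) ∈ U n) → Dense (⋃ n, U n)

/-- TWO has a winning strategy in Tkachuk's game `θ(X)`. -/
def TwoWinsTheta (X : Type*) [TopologicalSpace X] : Prop :=
  ∃ τ : List X → Set X, ∀ x : ℕ → X,
    (∀ n, IsOpen (τ (GHist x (n + 1))) ∧ x n ∈ τ (GHist x (n + 1))) ∧
    ¬ Dense (⋃ n, τ (GHist x (n + 1)))

/-- `Ω_x`: the family of subsets of `X` having `x` in their closure. -/
def OmegaPt {X : Type*} [TopologicalSpace X] (x : X) : Set (Set X) :=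
  {A | x ∈ closure A}

/-- ONE has a winning strategy in Gruenhage's game `G^c_{O,P}(X,x)`. -/
def OneWinsGruenhage {X : Type*} [TopologicalSpace X] (x : X) : Prop :=
  ∃ σ : List X → Set X, (∀ h, IsOpen (σ h) ∧ x ∈ σ h) ∧
    ∀ y : ℕ → X, (∀ n, y n ∈ σ (GHist y n)) → x ∈ closure (Set.range y)

/-- TWO has a winning strategy in Gruenhage's game `G^c_{O,P}(X,x)`. -/
def TwoWinsGruenhage {X : Type*} [TopologicalSpace X] (x : X) : Prop :=
  ∃ τ : List (Set X) → X, ∀ V : ℕ → Set X,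
    (∀ n, IsOpen (V n) ∧ x ∈ V n) →
    (∀ n, τ (GHist V (n + 1)) ∈ V n) ∧
    x ∉ closure (Set.range fun n => τ (GHist V (n + 1)))

/-- ONE has a winning strategy in the compact-open game on `X`. -/
def OneWinsCompactOpen (X : Type*) [TopologicalSpace X] : Prop :=
  ∃ σ : List (Set X) → Set X, (∀ h, IsCompact (σ h)) ∧
    ∀ U : ℕ → Set X, (∀ n, IsOpen (U n) ∧ σ (GHist U n) ⊆ U n) →
      (⋃ n, U n) = Set.univ

/-- `⪯` is downwards `P`-compatible. -/
def DownwardsCompat {α β : Type*} (R : α → β → Prop) (le : β → β → Prop) : Prop :=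
  ∀ a b₁ b₂, R a b₁ → R a b₂ → ∃ b, R a b ∧ le b b₁ ∧ le b b₂

/-- `⪯` is upwards `Q`-compatible. -/
def UpwardsCompat {γ β : Type*} (T : γ → β → Prop) (le : β → β → Prop) : Prop :=
  ∀ c b₁ b₂, T c b₁ → le b₁ b₂ → T c b₂

/-- `⪯` is countably downwards `P`-compatible. -/
def CountablyDownwardsCompat {α β : Type*} (R : α → β → Prop) (le : β → β → Prop) : Prop :=
  ∀ a, ∀ E : Set β, E.Countable → E.Nonempty → (∀ b ∈ E, R a b) →
    ∃ b', R a b' ∧ ∀ b ∈ E, le b' b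

/-- A relation is `ℵ₀`-preserving if some partial order on `B` is both upwards
compatible and countably downwards compatible with it. -/
def Aleph0Preserving {α β : Type*} (R : α → β → Prop) : Prop :=
  ∃ le : β → β → Prop, IsPartialOrder β le ∧
    UpwardsCompat R le ∧ CountablyDownwardsCompat R le

/-- `Dom_γ(T)`: the γ-dominating sequences of the relation `T`. -/
def GDomGamma {γ β : Type*} (T : γ → β → Prop) : Set (ℕ → β) :=
  {z | ∀ c : γ, {n : ℕ | ¬ T c (z n)}.Finite}

/-- ONE has a winning strategy in the game `G_γ(P,Q)`. -/
def OneWinsGgamma {α β γ : Type*} (R : α → β → Prop) (T : γ → β → Prop) : Prop :=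
  ∃ σ : List β → α, ∀ b : ℕ → β,
    (∀ n, R (σ (GHist b n)) (b n)) → b ∈ GDomGamma T

/-- TWO has a winning strategy in the game `G_γ(P,Q)`. -/
def TwoWinsGgamma {α β γ : Type*} (R : α → β → Prop) (T : γ → β → Prop) : Prop :=
  ∃ τ : List α → β, ∀ a : ℕ → α,
    (∀ n, R (a n) (τ (GHist a (n + 1)))) ∧
    (fun n => τ (GHist a (n + 1))) ∉ GDomGamma T

/-- ONE has a winning strategy in the game `G₁(𝒜, Dom_γ(T))`. -/
def OneWinsG1gamma {β γ : Type*} (𝒜 : Set (Set β)) (T : γ → β → Prop) : Prop :=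
  ∃ σ : List β → Set β, (∀ h, σ h ∈ 𝒜) ∧
    ∀ b : ℕ → β, (∀ n, b n ∈ σ (GHist b n)) → b ∉ GDomGamma T

/-- TWO has a winning strategy in the game `G₁(𝒜, Dom_γ(T))`. -/
def TwoWinsG1gamma {β γ : Type*} (𝒜 : Set (Set β)) (T : γ → β → Prop) : Prop :=
  ∃ τ : List (Set β) → β, ∀ S : ℕ → Set β, (∀ n, S n ∈ 𝒜) →
    (∀ n, τ (GHist S (n + 1)) ∈ S n) ∧
    (fun n => τ (GHist S (n + 1))) ∈ GDomGamma T

/-- The `ℵ₀`-modification of a relation: moves become nonempty countable subsets of `B`,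
dominated pointwise. -/
def CountMod {α β : Type*} (R : α → β → Prop) :
    α → {E : Set β // E.Countable ∧ E.Nonempty} → Prop :=
  fun a E => ∀ b ∈ E.1, R a b

/-! ONE splits the innings of the product game into a tree: the roots are the innings
`pair 0 j`, and the children of inning `m` are the innings `pair (m + 1) j`. On the first
coordinate, ONE plays a separate copy of the winning strategy for `G(P,Q)` on each set of
siblings; on the second coordinate, ONE plays the winning strategy for `G(P',Q')` along every
branch. Given `(c, c')`, choose among the roots a move whose first coordinate dominates `c`,
then among its children such a move, and so on. The resulting branch is a play of the second
strategy, so one of its moves also dominates `c'` in the second coordinate. -/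

section Replay

variable {α β γ : Type*}

theorem GHist_map {δ : Type*} (f : β → δ) (b : ℕ → β) (n : ℕ) :
    (GHist b n).map f = GHist (f ∘ b) n :=
  List.map_ofFn

theorem length_GHist (b : ℕ → β) (n : ℕ) : (GHist b n).length = n :=
  List.length_ofFn

theorem GHist_succ (b : ℕ → β) (n : ℕ) : GHist b (n + 1) = GHist b n ++ [b n] :=
  List.ofFn_succ_last

theorem getElem?_GHist_of_lt (b : ℕ → β) {n k : ℕ} (hk : k < n) :
    (GHist b n)[k]? = some (b k) := by
  simp [GHist, hk]

def IsOneWinning (R : α → β → Prop) (T : γ → β → Prop) (σ : List β → α) : Prop :=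
  ∀ b : ℕ → β, (∀ n, R (σ (GHist b n)) (b n)) → range b ∈ GDom T

/-- At inning `n`, run `σ` on the earlier moves made at the innings listed in `idx n`. -/
def replayAlong (idx : ℕ → List ℕ) (σ : List β → α) (h : List β) : α :=
  σ ((idx h.length).filterMap (h[·]?))

theorem replayAlong_GHist {idx : ℕ → List ℕ} {e : ℕ → ℕ} (he : StrictMono e)
    (hidx : ∀ k, idx (e k) = GHist e k) (σ : List β → α) (b : ℕ → β) (k : ℕ) :
    replayAlong idx σ (GHist b (e k)) = σ (GHist (b ∘ e) k) := by
  have hlt : ∀ i ∈ GHist e k, i < e k := by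
    simp only [GHist, List.mem_ofFn]
    rintro _ ⟨i, rfl⟩
    exact he i.isLt
  rw [replayAlong, ← GHist_map, length_GHist, hidx, ← List.filterMap_eq_map]
  exact congrArg σ (List.filterMap_congr fun i hi => getElem?_GHist_of_lt b (hlt i hi))

theorem IsOneWinning.range_comp_mem {R : α → β → Prop} {T : γ → β → Prop} {σ : List β → α}
    (hσ : IsOneWinning R T σ) {idx : ℕ → List ℕ} {e : ℕ → ℕ} (he : StrictMono e)
    (hidx : ∀ k, idx (e k) = GHist e k) {b : ℕ → β}
    (hb : ∀ k, R (replayAlong idx σ (GHist b (e k))) (b (e k))) :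
    range (b ∘ e) ∈ GDom T :=
  hσ _ fun k => replayAlong_GHist he hidx σ b k ▸ hb k

end Replay

namespace InningTree

open Nat

/-- The siblings of inning `n` that precede it. -/
def siblings (n : ℕ) : List ℕ :=
  GHist (pair (unpair n).1) (unpair n).2

theorem siblings_pair (i j : ℕ) : siblings (pair i j) = GHist (pair i) j := by
  simp [siblings]

def ancestors (n : ℕ) : List ℕ :=
  if (unpair n).1 = 0 then [] else
    ancestors ((unpair n).1 - 1) ++ [(unpair n).1 - 1]
termination_by n
decreasing_by
  have := unpair_left_le n
  omega

theorem ancestors_pair_zero (j : ℕ) : ancestors (pair 0 j) = [] := by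
  rw [ancestors]
  simp

theorem ancestors_pair_succ (m j : ℕ) : ancestors (pair (m + 1) j) = ancestors m ++ [m] := by
  rw [ancestors]
  simp

/-- The branch that, below each node `i`, descends to the child `pair i (f i)`. -/
def branch (f : ℕ → ℕ) : ℕ → ℕ
  | 0 => pair 0 (f 0)
  | k + 1 => pair (branch f k + 1) (f (branch f k + 1))

theorem branch_strictMono (f : ℕ → ℕ) : StrictMono (branch f) :=
  strictMono_nat_of_lt_succ fun _ => Nat.lt_of_succ_le (left_le_pair _ _)

theorem ancestors_branch (f : ℕ → ℕ) (k : ℕ) : ancestors (branch f k) = GHist (branch f) k := by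
  induction k with
  | zero => simp [branch, ancestors_pair_zero, GHist]
  | succ k ih => rw [branch, ancestors_pair_succ, ih, GHist_succ]

theorem exists_branch_eq_pair (f : ℕ → ℕ) (k : ℕ) : ∃ i, branch f k = pair i (f i) := by
  cases k <;> exact ⟨_, rfl⟩

end InningTree

open InningTree Nat in
theorem statement7_general {α β γ α' β' γ' : Type*}
    (R : α → β → Prop) (T : γ → β → Prop)
    (R' : α' → β' → Prop) (T' : γ' → β' → Prop)
    (hwin' : OneWinsG R' T')
    (hwin : OneWinsG R T) :
    OneWinsG (GProd R R') (GProd T T') := by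
  obtain ⟨σ, hσ : IsOneWinning R T σ⟩ := hwin
  obtain ⟨σ', hσ' : IsOneWinning R' T' σ'⟩ := hwin'
  refine ⟨fun h => (replayAlong siblings σ (h.map Prod.fst),
    replayAlong ancestors σ' (h.map Prod.snd)), fun b hb => ?_⟩
  simp only [GProd, GHist_map] at hb
  rintro ⟨c, c'⟩
  have hsiblings : ∀ i, ∃ j, T c (b (pair i j)).1 := fun i => by
    obtain ⟨_, ⟨j, rfl⟩, hj⟩ :=
      hσ.range_comp_mem (fun _ _ => pair_lt_pair_right i) (siblings_pair i) (fun j => (hb _).1) c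
    exact ⟨j, hj⟩
  choose f hf using hsiblings
  obtain ⟨_, ⟨k, rfl⟩, hk⟩ :=
    hσ'.range_comp_mem (branch_strictMono f) (ancestors_branch f) (fun k => (hb _).2) c'
  obtain ⟨i, hi⟩ := exists_branch_eq_pair f k
  exact ⟨b (branch f k), ⟨branch f k, rfl⟩, hi ▸ hf i, hk⟩

/-- If ONE has a winning strategy in `G(P',Q')` and in `G(P,Q)`, then
ONE has a winning strategy in `G(P⊗P', Q⊗Q')`. -/
theorem statement7 {α β γ α' β' γ' : Type*}
    [Nonempty α] [Nonempty γ] [Nonempty α'] [Nonempty γ']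
    (R : α → β → Prop) (T : γ → β → Prop)
    (R' : α' → β' → Prop) (T' : γ' → β' → Prop)
    (hR : IsTotalRel R) (hT : IsTotalRel T)
    (hR' : IsTotalRel R') (hT' : IsTotalRel T')
    (hwin' : OneWinsG R' T')
    (hwin : OneWinsG R T) :
    OneWinsG (GProd R R') (GProd T T') :=
  statement7_general R T R' T' hwin' hwin
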